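/- Let G be a graph with maximum degree Δ(G) and domination number γ(G), let π be a secure coalition partition of G, and let Z ∈ π. Then the number of sets of π that form a secure coalition with Z is at most max{Δ(G)+1, n−γ(G)}. -/

import Mathlib

namespace SecCoal

/-- `D` is a dominating set of `G`. -/
def IsDominating {V : Type*} (G : SimpleGraph V) (D : Set V) : Prop :=
  ∀ v ∉ D, ∃ u ∈ D, G.Adj u v

/-- `S` is a secure dominating set of `G`. -/
def IsSecureDominating {V : Type*} (G : SimpleGraph V) (S : Set V) : Prop :=
  IsDominating G S ∧
    ∀ u ∉ S, ∃ v ∈ S, G.Adj v u ∧ IsDominating G ((S \ {v}) ∪ {u})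

/-- Degree of a vertex. -/
noncomputable def deg {V : Type*} (G : SimpleGraph V) (v : V) : ℕ :=
  (G.neighborSet v).ncard

/-- Minimum degree. -/
noncomputable def minDeg {V : Type*} (G : SimpleGraph V) : ℕ :=
  sInf (Set.range (deg G))

/-- Maximum degree. -/
noncomputable def maxDeg {V : Type*} (G : SimpleGraph V) : ℕ :=
  sSup (Set.range (deg G))

/-- `π` is a secure coalition partition of `G`. -/
def IsSecPartition {V : Type*} (G : SimpleGraph V) (π : Finset (Set V)) : Prop :=
  Setoid.IsPartition (↑π : Set (Set V)) ∧
    ∀ A ∈ π,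
      (∃ v, A = {v} ∧ deg G v = Nat.card V - 1 ∧ IsSecureDominating G A) ∨
      (¬ IsSecureDominating G A ∧
        ∃ B ∈ π, B ≠ A ∧ IsSecureDominating G (A ∪ B))

/-- The secure coalition number of `G`. -/
noncomputable def SEC {V : Type*} (G : SimpleGraph V) : ℕ :=
  sSup {k | ∃ π : Finset (Set V), IsSecPartition G π ∧ π.card = k}

/-- Two disjoint sets form a secure coalition. -/
def FormsSecCoalition {V : Type*} (G : SimpleGraph V) (A B : Set V) : Prop :=
  Disjoint A B ∧ ¬ IsSecureDominating G A ∧ ¬ IsSecureDominating G B ∧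
    IsSecureDominating G (A ∪ B)

/-- The domination number of `G`. -/
noncomputable def gammaDom {V : Type*} (G : SimpleGraph V) : ℕ :=
  sInf {k | ∃ D : Set V, IsDominating G D ∧ D.ncard = k}

/-- The secure domination number of `G`. -/
noncomputable def secDomNum {V : Type*} (G : SimpleGraph V) : ℕ :=
  sInf {k | ∃ S : Set V, IsSecureDominating G S ∧ S.ncard = k}

/-- `π` is a coalition partition (w.r.t. domination) of `G`. -/
def IsCoalitionPartition {V : Type*} (G : SimpleGraph V) (π : Finset (Set V)) : Prop :=
  Setoid.IsPartition (↑π : Set (Set V)) ∧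
    ∀ A ∈ π,
      (∃ v, A = {v} ∧ IsDominating G A) ∨
      (¬ IsDominating G A ∧ ∃ B ∈ π, B ≠ A ∧ IsDominating G (A ∪ B))

/-- The coalition number of `G`. -/
noncomputable def CNum {V : Type*} (G : SimpleGraph V) : ℕ :=
  sSup {k | ∃ π : Finset (Set V), IsCoalitionPartition G π ∧ π.card = k}

/-- The secure coalition graph of `G` w.r.t. a partition `π`. -/
def SCG {V : Type*} (G : SimpleGraph V) (π : Finset (Set V)) :
    SimpleGraph {A : Set V // A ∈ π} where
  Adj A B := FormsSecCoalition G A.1 B.1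
  symm := ⟨by
    rintro A B ⟨hd, h1, h2, h3⟩
    exact ⟨hd.symm, h2, h1, by rwa [Set.union_comm]⟩⟩
  loopless := ⟨by
    rintro A ⟨hd, h1, h2, h3⟩
    exact h1 (by simpa using h3)⟩

end SecCoal

/-!
The partners of `Z` are pairwise disjoint members of `π`, so there are at most as many of them as
there are vertices in any set that each partner meets. If `Z` dominates, every partner `A` has a
vertex outside `Z` (otherwise `Z ∪ A = Z` would be secure dominating), and `|V \ Z| ≤ n - γ(G)`.
Otherwise some vertex `v` is not dominated by `Z`; as `Z ∪ A` dominates `v`, every partner meets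
the closed neighbourhood `N[v]`, which has at most `Δ(G) + 1` vertices.
-/

theorem Set.PairwiseDisjoint.ncard_le_of_forall_inter_nonempty {α : Type*}
    {S : Set (Set α)} {t : Set α} (hS : S.PairwiseDisjoint id) (ht : t.Finite)
    (hmeet : ∀ A ∈ S, (A ∩ t).Nonempty) : S.ncard ≤ t.ncard := by
  choose f hf using hmeet
  have := ht.to_subtype
  rw [← Nat.card_coe_set_eq, ← Nat.card_coe_set_eq]
  refine Nat.card_le_card_of_injective (fun A => ⟨f A.1 A.2, (hf A.1 A.2).2⟩) ?_
  rintro ⟨A, hA⟩ ⟨B, hB⟩ hAB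
  have hfAB : f A hA = f B hB := congrArg Subtype.val hAB
  exact Subtype.ext (hS.elim_set hA hB _ (hf A hA).1 (hfAB ▸ (hf B hB).1))

namespace SecCoal

variable {V : Type*} {G : SimpleGraph V}

theorem FormsSecCoalition.inter_compl_nonempty {Z A : Set V} (h : FormsSecCoalition G Z A) :
    (A ∩ Zᶜ).Nonempty :=
  Set.nonempty_of_not_subset fun hAZ => h.2.1 (Set.union_eq_left.mpr hAZ ▸ h.2.2.2)

theorem inter_insert_neighborSet_nonempty {Z A : Set V} (hZA : IsDominating G (Z ∪ A)) {v : V}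
    (hvZ : v ∉ Z) (hv : ∀ u ∈ Z, ¬ G.Adj u v) :
    (A ∩ insert v (G.neighborSet v)).Nonempty := by
  by_cases hvA : v ∈ A
  · exact ⟨v, hvA, Set.mem_insert v _⟩
  obtain ⟨u, hu | hu, huv⟩ := hZA v (by simp [hvZ, hvA])
  · exact absurd huv (hv u hu)
  · exact ⟨u, hu, Set.mem_insert_of_mem v huv.symm⟩

theorem deg_le_maxDeg [Finite V] (v : V) : deg G v ≤ maxDeg G :=
  le_csSup (Set.finite_range _).bddAbove ⟨v, rfl⟩

theorem ncard_insert_neighborSet_le [Finite V] (v : V) :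
    (insert v (G.neighborSet v)).ncard ≤ maxDeg G + 1 := by
  rw [Set.ncard_insert_of_notMem (G.notMem_neighborSet_self)]
  exact Nat.succ_le_succ (deg_le_maxDeg v)

theorem ncard_compl_le_of_isDominating [Fintype V] {Z : Set V} (hZ : IsDominating G Z) :
    Zᶜ.ncard ≤ Fintype.card V - gammaDom G := by
  have hγ : gammaDom G ≤ Z.ncard := Nat.sInf_le ⟨Z, hZ, rfl⟩
  rw [Set.ncard_compl, Nat.card_eq_fintype_card]
  omega

end SecCoal

open SecCoal
theorem stmt5_general {V : Type*} [Fintype V] (G : SimpleGraph V)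
    (π : Finset (Set V)) (Z : Set V)
    (hπ : IsSecPartition G π) :
    {A ∈ (↑π : Set (Set V)) | FormsSecCoalition G Z A}.ncard ≤
      max (maxDeg G + 1) (Fintype.card V - gammaDom G) := by
  have hdisj : {A ∈ (↑π : Set (Set V)) | FormsSecCoalition G Z A}.PairwiseDisjoint id :=
    hπ.1.pairwiseDisjoint.subset (Set.sep_subset _ _)
  by_cases hZ : IsDominating G Z
  · refine le_max_of_le_right (le_trans ?_ (ncard_compl_le_of_isDominating hZ))
    exact hdisj.ncard_le_of_forall_inter_nonempty (Set.toFinite _)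
      fun A hA => hA.2.inter_compl_nonempty
  · obtain ⟨v, hvZ, hv⟩ : ∃ v ∉ Z, ∀ u ∈ Z, ¬ G.Adj u v := by
      simpa [IsDominating] using hZ
    refine le_max_of_le_left (le_trans ?_ (ncard_insert_neighborSet_le v))
    exact hdisj.ncard_le_of_forall_inter_nonempty (Set.toFinite _)
      fun A hA => inter_insert_neighborSet_nonempty hA.2.2.2.2.1 hvZ hv

theorem stmt5 {V : Type*} [Fintype V] (G : SimpleGraph V)
    (π : Finset (Set V)) (Z : Set V)
    (hπ : IsSecPartition G π) (hZ : Z ∈ π) :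
    {A ∈ (↑π : Set (Set V)) | FormsSecCoalition G Z A}.ncard ≤
      max (maxDeg G + 1) (Fintype.card V - gammaDom G) :=
  stmt5_general G π Z hπ
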